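/- arXiv:1708.00722 — 3 statements merged into one kernel-verified Lean document; each statement's English description precedes it below -/
import Mathlib

section
/- In a CI-loop (Q, ·, 1), the map J is an automorphism of (Q, ·), i.e., J(x · y) = J(x) · J(y) for all x, y ∈ Q. -/
theorem stmt_10_general {Q : Type*} (mul : Q → Q → Q)
    (J : Q → Q)
    (hCI : ∀ x y, mul (mul x y) (J x) = y) :
    ∀ x y, J (mul x y) = mul (J x) (J y) := by
  intro x y
  have hy : mul y (J (mul x y)) = J x := by
    simpa only [hCI x y] using hCI (mul x y) (J x)
  calc J (mul x y) = mul (mul y (J (mul x y))) (J y) := (hCI y _).symm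
    _ = mul (J x) (J y) := by rw [hy]

theorem stmt_10 {Q : Type*} (mul : Q → Q → Q) (one : Q)
    (hq1 : ∀ a b, ∃! x, mul a x = b) (hq2 : ∀ a b, ∃! y, mul y a = b)
    (hone : ∀ x, mul one x = x ∧ mul x one = x)
    (J : Q → Q) (hJ : Function.Bijective J)
    (hinv : ∀ x, mul x (J x) = one)
    (hCI : ∀ x y, mul (mul x y) (J x) = y) :
    ∀ x y, J (mul x y) = mul (J x) (J y) :=
  stmt_10_general mul J hCI
end

section
/- A finite groupoid (Q, ·) satisfying the left CI identity (x · y) · J_r(x) = y for some map J_r : Q → Q is a quasigroup. -/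
/-!
The identity says that right multiplication by `Jr x` is a left inverse of left multiplication
by `x`. By finiteness every left multiplication is then bijective, and its left inverse is its
two-sided inverse, so right multiplication by any `Jr x` is bijective too. Finally `Jr` is
injective, hence surjective, so every right multiplication is bijective.
-/

open Function

namespace LeftCI

variable {Q : Type*} [Finite Q] {mul : Q → Q → Q} {Jr : Q → Q}

theorem bijective_mul_left (hCI : ∀ x, LeftInverse (fun z => mul z (Jr x)) (mul x)) (x : Q) :
    Bijective (mul x) :=
  Finite.injective_iff_bijective.mp (hCI x).injective

theorem bijective_mul_right_jr (hCI : ∀ x, LeftInverse (fun z => mul z (Jr x)) (mul x)) (x : Q) :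
    Bijective (fun z => mul z (Jr x)) :=
  have hRight : RightInverse (fun z => mul z (Jr x)) (mul x) :=
    (hCI x).rightInverse_of_surjective (bijective_mul_left hCI x).2
  ⟨hRight.injective, (hCI x).surjective⟩

theorem injective_jr (hCI : ∀ x, LeftInverse (fun z => mul z (Jr x)) (mul x)) : Injective Jr := by
  -- `mul a` and `mul b` share the injective left inverse `(· * Jr a)`, so they coincide;
  -- applying them to `Jr a` then gives `(· * Jr a)` the same value at `a` and at `b`.
  intro a b hab
  have hRinj := (bijective_mul_right_jr hCI a).1
  have hmul : ∀ y, mul a y = mul b y := fun y =>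
    hRinj <| (hCI a y).trans <| by rw [hab]; exact (hCI b y).symm
  exact hRinj (hmul (Jr a))

end LeftCI

theorem stmt_16 {Q : Type*} [Finite Q] (mul : Q → Q → Q) (Jr : Q → Q)
    (hCI : ∀ x y, mul (mul x y) (Jr x) = y) :
    ∀ a b, (∃! x, mul a x = b) ∧ (∃! y, mul y a = b) := by
  intro a b
  refine ⟨(LeftCI.bijective_mul_left hCI a).existsUnique b, ?_⟩
  obtain ⟨x, rfl⟩ := Finite.surjective_of_injective (LeftCI.injective_jr hCI) a
  exact (LeftCI.bijective_mul_right_jr hCI x).existsUnique b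
end

section
/- If (Q, ·) is a groupoid with maps J_r and J_l satisfying both (x · y) · J_r(x) = y and J_l(x) · (y · x) = y for all x, y ∈ Q (a CI-groupoid), then (Q, ·) is a quasigroup. -/
/-!
The identity `(x · y) · J_r(x) = y` says that `z ↦ z · J_r(x)` is a left inverse of left
multiplication by `x`, and `J_l(x) · (y · x) = y` says that left multiplication by `J_l(x)` is a left
inverse of right multiplication by `x`; so both multiplications are injective. Cancelling with them
gives `J_l ∘ J_r = id = J_r ∘ J_l`, and then `b · J_r(a)` and `J_l(a) · b` solve `a · x = b` and
`y · a = b`, so both multiplications are bijective.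
-/

namespace CIGroupoid

variable {Q : Type*} {mul : Q → Q → Q} {Jr Jl : Q → Q}

theorem injective_mul_left (hCIr : ∀ x y, mul (mul x y) (Jr x) = y) (a : Q) :
    Function.Injective (mul a) :=
  Function.LeftInverse.injective (g := fun z => mul z (Jr a)) (hCIr a)

theorem injective_mul_right (hCIl : ∀ x y, mul (Jl x) (mul y x) = y) (a : Q) :
    Function.Injective (fun y => mul y a) :=
  Function.LeftInverse.injective (g := mul (Jl a)) (hCIl a)

theorem Jl_Jr (hCIr : ∀ x y, mul (mul x y) (Jr x) = y) (hCIl : ∀ x y, mul (Jl x) (mul y x) = y)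
    (x : Q) : Jl (Jr x) = x :=
  injective_mul_right hCIl x (by simpa only [hCIr] using hCIl (Jr x) (mul x x))

theorem Jr_Jl (hCIr : ∀ x y, mul (mul x y) (Jr x) = y) (hCIl : ∀ x y, mul (Jl x) (mul y x) = y)
    (x : Q) : Jr (Jl x) = x :=
  injective_mul_left hCIr x (by simpa only [hCIl] using hCIr (Jl x) (mul x x))

theorem bijective_mul_left (hCIr : ∀ x y, mul (mul x y) (Jr x) = y)
    (hCIl : ∀ x y, mul (Jl x) (mul y x) = y) (a : Q) : Function.Bijective (mul a) :=
  ⟨injective_mul_left hCIr a, fun b =>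
    ⟨mul b (Jr a), by simpa only [Jl_Jr hCIr hCIl] using hCIl (Jr a) b⟩⟩

theorem bijective_mul_right (hCIr : ∀ x y, mul (mul x y) (Jr x) = y)
    (hCIl : ∀ x y, mul (Jl x) (mul y x) = y) (a : Q) : Function.Bijective (fun y => mul y a) :=
  ⟨injective_mul_right hCIl a, fun b =>
    ⟨mul (Jl a) b, by simpa only [Jr_Jl hCIr hCIl] using hCIr (Jl a) b⟩⟩

end CIGroupoid

theorem stmt_17 {Q : Type*} (mul : Q → Q → Q) (Jr Jl : Q → Q)
    (hCIr : ∀ x y, mul (mul x y) (Jr x) = y)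
    (hCIl : ∀ x y, mul (Jl x) (mul y x) = y) :
    ∀ a b, (∃! x, mul a x = b) ∧ (∃! y, mul y a = b) := fun a b =>
  ⟨(CIGroupoid.bijective_mul_left hCIr hCIl a).existsUnique b,
    (CIGroupoid.bijective_mul_right hCIr hCIl a).existsUnique b⟩
end
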